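/- Let G be an additive abelian group, m, n ≥ 2, and A an m×n partial matrix over G whose underlying bipartite graph H_A is connected. If A is cycle-balanced, then the matrix C defined by choosing, for each (s,t) ∈ [m]×[n], a path (x_s = x_{i_1}, y_{j_1}, …, x_{i_k}, y_{j_k} = y_t) in H_A and setting c_{s,t} = Σ_{r=1}^{k} a_{i_r, j_r} − Σ_{r=1}^{k−1} a_{i_{r+1}, j_r} is well defined (independent of the chosen path), is a completion of A, and satisfies σ₋(C) = 0. -/

import Mathlib

/-- The balanced collapsing sum of an `(m+1) × (n+1)` matrix. -/
def bcs {G : Type*} [AddCommGroup G] {m n : ℕ}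
    (A : Matrix (Fin (m + 1)) (Fin (n + 1)) G) : Matrix (Fin m) (Fin n) G :=
  fun i j => A i.castSucc j.castSucc - A i.succ j.castSucc
    - A i.castSucc j.succ + A i.succ j.succ

/-- `C` is a completion of the partial matrix `A` (blank entries are `none`). -/
def IsCompletion {G : Type*} {m n : ℕ} (A : Matrix (Fin m) (Fin n) (Option G))
    (C : Matrix (Fin m) (Fin n) G) : Prop :=
  ∀ i j, A i j ≠ none → A i j = some (C i j)

/-- The bipartite graph `H_A` of a partial matrix `A`, on the vertex set
`{x_1, …, x_m} ⊕ {y_1, …, y_n}`, with an edge `(x_i, y_j)` whenever `a_{i,j} ≠ ∗`. -/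
def HGraph {G : Type*} {m n : ℕ} (A : Matrix (Fin m) (Fin n) (Option G)) :
    SimpleGraph (Fin m ⊕ Fin n) :=
  SimpleGraph.fromRel (fun u v =>
    ∃ i j, u = Sum.inl i ∧ v = Sum.inr j ∧ A i j ≠ none)

/-- `(i, j)` describes a path `(x_s = x_{i 0}, y_{j 0}, x_{i 1}, y_{j 1}, …, x_{i k},
y_{j k} = y_t)` in `H_A` from the row vertex `s` to the column vertex `t`: all edges
lie in `H_A` and no vertex is repeated. -/
def IsPathIn {G : Type*} {m n : ℕ} (A : Matrix (Fin m) (Fin n) (Option G))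
    (s : Fin m) (t : Fin n)
    {k : ℕ} (i : Fin (k + 1) → Fin m) (j : Fin (k + 1) → Fin n) : Prop :=
  i 0 = s ∧ j (Fin.last k) = t ∧
  Function.Injective i ∧ Function.Injective j ∧
  (∀ r, A (i r) (j r) ≠ none) ∧
  (∀ r : Fin k, A (i r.succ) (j r.castSucc) ≠ none)

/-- The value `Σ_{r=1}^{k} a_{i_r, j_r} − Σ_{r=1}^{k−1} a_{i_{r+1}, j_r}` associated to a
path `(i, j)`. -/
def pathValue {G : Type*} [AddCommGroup G] {m n : ℕ}
    (A : Matrix (Fin m) (Fin n) (Option G))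
    {k : ℕ} (i : Fin (k + 1) → Fin m) (j : Fin (k + 1) → Fin n) : G :=
  ∑ r : Fin (k + 1), (A (i r) (j r)).getD 0
    - ∑ r : Fin k, (A (i r.succ) (j r.castSucc)).getD 0

/-- `(i, j)` describes a cycle in the partial matrix `A`: writing the index sequence
`(i 0, j 0, i 1, j 1, …, i k, j k, i 0)` (addition of indices is modulo `k + 1`),
the corresponding closed walk in the bipartite graph `H_A` uses only edges of `H_A`
and does not repeat edges. -/
def IsCycleIn {G : Type*} {m n : ℕ} (A : Matrix (Fin m) (Fin n) (Option G))
    {k : ℕ} (i : Fin (k + 1) → Fin m) (j : Fin (k + 1) → Fin n) : Prop :=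
  (∀ r, A (i r) (j r) ≠ none) ∧
  (∀ r, A (i (r + 1)) (j r) ≠ none) ∧
  Function.Injective (fun p : Fin (k + 1) × Bool =>
    if p.2 then (i p.1, j p.1) else (i (p.1 + 1), j p.1))

/-- The cycle `(i, j)` in `A` is balanced: `Σ_r (a_{i_r, j_r} − a_{i_{r+1}, j_r}) = 0`. -/
def IsBalancedCycle {G : Type*} [AddCommGroup G] {m n : ℕ}
    (A : Matrix (Fin m) (Fin n) (Option G))
    {k : ℕ} (i : Fin (k + 1) → Fin m) (j : Fin (k + 1) → Fin n) : Prop :=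
  ∑ r : Fin (k + 1), ((A (i r) (j r)).getD 0 - (A (i (r + 1)) (j r)).getD 0) = 0

/-- A partial matrix is cycle-balanced if every cycle in it is balanced. -/
def CycleBalanced {G : Type*} [AddCommGroup G] {m n : ℕ}
    (A : Matrix (Fin m) (Fin n) (Option G)) : Prop :=
  ∀ (k : ℕ) (i : Fin (k + 1) → Fin m) (j : Fin (k + 1) → Fin n),
    IsCycleIn A i j → IsBalancedCycle A i j

/-!
Weight a traversal of the edge `(x_i, y_j)` of `H_A` by `a_{i,j}` from the row side and by
`-a_{i,j}` from the column side, so that the value of a path is the weight of its walk. A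
cycle of the graph `H_A`, read from one of its row vertices, is a path closed up by one more
entry, i.e. a cycle of the partial matrix, so cycle-balancedness makes every graph cycle weigh
zero. Shortcutting a walk to a path (`Walk.bypass`) only removes closed subwalks that are cycles
or edges traversed back and forth, so every closed walk weighs zero and, `H_A` being connected,
walk weights are differences `φ v - φ u` of a potential. Hence `c_{s,t} = φ(y_t) - φ(x_s)`: this
does not depend on the path, agrees with `a_{s,t}` through the one-edge path, and every
alternating sum `c_{i,j} - c_{i+1,j} - c_{i,j+1} + c_{i+1,j+1}` vanishes.
-/

open SimpleGraph

namespace SimpleGraph.Walk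

variable {V G : Type*} [AddCommGroup G] {Γ : SimpleGraph V} (w : V → V → G)

def weight : ∀ {u v : V}, Γ.Walk u v → G
  | _, _, nil => 0
  | u, _, cons (v := v) _ p => w u v + p.weight

@[simp] lemma weight_nil {u : V} : (nil : Γ.Walk u u).weight w = 0 := rfl

@[simp] lemma weight_cons {u v x : V} (h : Γ.Adj u v) (p : Γ.Walk v x) :
    (cons h p).weight w = w u v + p.weight w := rfl

@[simp] lemma weight_append {u v x : V} (p : Γ.Walk u v) (q : Γ.Walk v x) :
    (p.append q).weight w = p.weight w + q.weight w := by
  induction p with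
  | nil => simp
  | cons h p ih => simp [ih, add_assoc]

variable {w}

lemma weight_reverse (hw : ∀ u v, w v u = -w u v) {u v : V} (p : Γ.Walk u v) :
    p.reverse.weight w = -p.weight w := by
  induction p with
  | nil => simp
  | cons h p ih =>
    rw [reverse_cons, weight_append, ih, weight_cons, weight_cons, weight_nil, hw]
    abel

/-- A closed walk `u → v → ⋯ → u` whose return part is a path is either the edge `uv`
traversed twice or a cycle. -/
lemma weight_cons_eq_zero_of_isPath (hw : ∀ u v, w v u = -w u v)
    (hcyc : ∀ ⦃u⦄ (c : Γ.Walk u u), c.IsCycle → c.weight w = 0)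
    {u v : V} (h : Γ.Adj u v) {p : Γ.Walk v u} (hp : p.IsPath) :
    (cons h p).weight w = 0 := by
  by_cases he : s(u, v) ∈ p.edges
  · cases p with
    | nil => exact absurd rfl h.ne
    | cons h' q =>
      rw [cons_isPath_iff] at hp
      rcases List.mem_cons.1 he with he | he
      · obtain rfl : _ = u := by
          rcases Sym2.eq_iff.1 he with ⟨huv, -⟩ | ⟨hux, -⟩
          · exact absurd huv h.ne
          · exact hux.symm
        obtain rfl := (isPath_iff_nil.1 hp.1).eq_nil
        rw [weight_cons, weight_cons, weight_nil, hw, neg_add_cancel_left]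
      · exact absurd (q.snd_mem_support_of_mem_edges he) hp.2
  · exact hcyc _ ((cons_isCycle_iff p h).2 ⟨hp, he⟩)

variable [DecidableEq V]

lemma weight_bypass (hw : ∀ u v, w v u = -w u v)
    (hcyc : ∀ ⦃u⦄ (c : Γ.Walk u u), c.IsCycle → c.weight w = 0) {u v : V}
    (p : Γ.Walk u v) :
    p.bypass.weight w = p.weight w := by
  induction p with
  | nil => rfl
  | @cons u v x h p ih =>
    rw [bypass]
    split_ifs with hs
    · have hclosed := weight_cons_eq_zero_of_isPath hw hcyc h (p.bypass_isPath.takeUntil hs)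
      rw [weight_cons] at hclosed
      calc (p.bypass.dropUntil u hs).weight w
          = w u v + (p.bypass.takeUntil u hs).weight w + (p.bypass.dropUntil u hs).weight w := by
            rw [hclosed, zero_add]
        _ = (cons h p).weight w := by
            rw [add_assoc, ← weight_append, take_spec, ih, weight_cons]
    · rw [weight_cons, weight_cons, ih]

lemma weight_eq_of_forall_isCycle (hw : ∀ u v, w v u = -w u v)
    (hcyc : ∀ ⦃u⦄ (c : Γ.Walk u u), c.IsCycle → c.weight w = 0) {u v : V}
    (p q : Γ.Walk u v) :
    p.weight w = q.weight w := by
  have hnil : (p.append q.reverse).bypass = nil :=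
    (isPath_iff_nil.1 (p.append q.reverse).bypass_isPath).eq_nil
  have h0 := weight_bypass hw hcyc (p.append q.reverse)
  rwa [hnil, weight_nil, weight_append, weight_reverse hw, ← sub_eq_add_neg, eq_comm,
    sub_eq_zero] at h0

lemma exists_potential (hw : ∀ u v, w v u = -w u v)
    (hcyc : ∀ ⦃u⦄ (c : Γ.Walk u u), c.IsCycle → c.weight w = 0) (hconn : Γ.Connected) :
    ∃ φ : V → G, ∀ {u v : V} (p : Γ.Walk u v), p.weight w = φ v - φ u := by
  obtain ⟨base⟩ := hconn.nonempty
  have walkFrom : ∀ v, Γ.Walk base v := fun v => (hconn.preconnected base v).some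
  refine ⟨fun v => (walkFrom v).weight w, fun p => ?_⟩
  dsimp only
  rw [weight_eq_of_forall_isCycle hw hcyc (walkFrom _) ((walkFrom _).append p), weight_append,
    add_sub_cancel_left]

end SimpleGraph.Walk

section PartialMatrix

variable {G : Type*} {m n : ℕ} {A : Matrix (Fin m) (Fin n) (Option G)}

lemma hGraph_adj_inl_inr {a : Fin m} {b : Fin n} :
    (HGraph A).Adj (.inl a) (.inr b) ↔ A a b ≠ none := by
  simp [HGraph]

lemma hGraph_adj_inl {a : Fin m} {v : Fin m ⊕ Fin n} :
    (HGraph A).Adj (.inl a) v ↔ ∃ b, v = .inr b ∧ A a b ≠ none := by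
  cases v <;> simp [HGraph]

lemma hGraph_adj_inr {b : Fin n} {v : Fin m ⊕ Fin n} :
    (HGraph A).Adj (.inr b) v ↔ ∃ a, v = .inl a ∧ A a b ≠ none := by
  cases v <;> simp [HGraph, eq_comm]

lemma IsPathIn.tail {s : Fin m} {t : Fin n} {k : ℕ} {i : Fin (k + 2) → Fin m}
    {j : Fin (k + 2) → Fin n} (h : IsPathIn A s t i j) :
    IsPathIn A (i 1) t (Fin.tail i) (Fin.tail j) := by
  obtain ⟨-, hlast, hi, hj, hdiag, hsub⟩ := h
  exact ⟨rfl, by rwa [Fin.tail, Fin.succ_last], hi.comp (Fin.succ_injective _),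
    hj.comp (Fin.succ_injective _), fun r => hdiag r.succ, fun r => hsub r.succ⟩

lemma IsPathIn.cons {a a' : Fin m} {b : Fin n} {t : Fin n} {k : ℕ} {i : Fin (k + 1) → Fin m}
    {j : Fin (k + 1) → Fin n} (h : IsPathIn A a' t i j) (hab : A a b ≠ none)
    (ha'b : A a' b ≠ none) (ha : a ∉ Set.range i) (hb : b ∉ Set.range j) :
    IsPathIn A a t (Fin.cons a i) (Fin.cons b j) := by
  obtain ⟨rfl, hlast, hi, hj, hdiag, hsub⟩ := h
  refine ⟨rfl, by rwa [← Fin.succ_last, Fin.cons_succ], Fin.cons_injective_iff.2 ⟨ha, hi⟩,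
    Fin.cons_injective_iff.2 ⟨hb, hj⟩, Fin.cases hab hdiag, Fin.cases ha'b fun r => ?_⟩
  simpa [← Fin.succ_castSucc] using hsub r

lemma IsPathIn.isCycleIn {s : Fin m} {t : Fin n} {k : ℕ} {i : Fin (k + 1) → Fin m}
    {j : Fin (k + 1) → Fin n} (h : IsPathIn A s t i j) (hk : 1 ≤ k) (hst : A s t ≠ none) :
    IsCycleIn A i j := by
  obtain ⟨rfl, rfl, hi, hj, hdiag, hsub⟩ := h
  have hsucc (r : Fin (k + 1)) : r ≠ r + 1 := by
    rw [Ne, left_eq_add, Fin.one_eq_zero_iff]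
    omega
  refine ⟨hdiag, fun r => ?_, ?_⟩
  · induction r using Fin.lastCases with
    | last => rwa [Fin.last_add_one]
    | cast r => rw [Fin.coeSucc_eq_succ]; exact hsub r
  · rintro ⟨r, _ | _⟩ ⟨r', _ | _⟩ hrr' <;>
      simp only [Bool.false_eq_true, if_true, if_false, Prod.mk.injEq] at hrr' <;>
      obtain ⟨hrr'i, hrr'j⟩ := hrr' <;> obtain rfl := hj hrr'j
    · rfl
    · exact absurd (hi hrr'i).symm (hsucc r)
    · exact absurd (hi hrr'i) (hsucc r)
    · rfl

variable [AddCommGroup G]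

variable (A) in
def edgeWeight : Fin m ⊕ Fin n → Fin m ⊕ Fin n → G
  | .inl i, .inr j => (A i j).getD 0
  | .inr j, .inl i => -(A i j).getD 0
  | _, _ => 0

lemma edgeWeight_swap (u v : Fin m ⊕ Fin n) : edgeWeight A v u = -edgeWeight A u v := by
  cases u <;> cases v <;> simp [edgeWeight]

lemma pathValue_succ {k : ℕ} (i : Fin (k + 2) → Fin m) (j : Fin (k + 2) → Fin n) :
    pathValue A i j = (A (i 0) (j 0)).getD 0 - (A (i 1) (j 0)).getD 0
      + pathValue A (Fin.tail i) (Fin.tail j) := by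
  simp only [pathValue, Fin.sum_univ_succ, Fin.tail, ← Fin.succ_castSucc, Fin.castSucc_zero,
    Fin.succ_zero_eq_one]
  abel

lemma exists_walk_of_isPathIn {s : Fin m} {t : Fin n} :
    ∀ {k : ℕ} {i : Fin (k + 1) → Fin m} {j : Fin (k + 1) → Fin n}, IsPathIn A s t i j →
      ∃ p : (HGraph A).Walk (.inl s) (.inr t), p.weight (edgeWeight A) = pathValue A i j
  | 0, i, j, h => by
    obtain ⟨rfl, rfl, -, -, hdiag, -⟩ := h
    exact ⟨.cons (hGraph_adj_inl_inr.2 (hdiag 0)) .nil, by simp [edgeWeight, pathValue]⟩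
  | k + 1, i, j, h => by
    obtain ⟨p, hp⟩ := exists_walk_of_isPathIn h.tail
    obtain ⟨rfl, -, -, -, hdiag, hsub⟩ := h
    have hsub0 : A (i 1) (j 0) ≠ none := hsub 0
    refine ⟨.cons (hGraph_adj_inl_inr.2 (hdiag 0)) (.cons (hGraph_adj_inl_inr.2 hsub0).symm p),
      ?_⟩
    rw [Walk.weight_cons, Walk.weight_cons, hp, pathValue_succ]
    simp only [edgeWeight]
    abel

lemma exists_isPathIn_of_isPath {s : Fin m} {t : Fin n} (p : (HGraph A).Walk (.inl s) (.inr t))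
    (hp : p.IsPath) :
    ∃ (k : ℕ) (i : Fin (k + 1) → Fin m) (j : Fin (k + 1) → Fin n), IsPathIn A s t i j ∧
      p.length = 2 * k + 1 ∧ pathValue A i j = p.weight (edgeWeight A) ∧
      (∀ r, .inl (i r) ∈ p.support) ∧ (∀ r, .inr (j r) ∈ p.support) := by
  induction hN : p.length using Nat.strong_induction_on generalizing s p with
  | _ N ih =>
    cases p with
    | cons h q =>
      obtain ⟨b, rfl, hsb⟩ := hGraph_adj_inl.1 h
      cases q with
      | nil =>
        have hinj {α : Type} (f : Fin 1 → α) : f.Injective := fun _ _ _ => Subsingleton.elim _ _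
        exact ⟨0, fun _ => s, fun _ => t, ⟨rfl, rfl, hinj _, hinj _, fun _ => hsb, Fin.elim0⟩,
          hN.symm, by simp [pathValue, edgeWeight], by simp, by simp⟩
      | cons h' q' =>
        obtain ⟨a, rfl, hab⟩ := hGraph_adj_inr.1 h'
        have hq' : q'.IsPath := hp.of_cons.of_cons
        obtain ⟨k, i, j, hij, hlen, hval, hi, hj⟩ :=
          ih q'.length (by simp [← hN]) q' hq' rfl
        simp only [Walk.cons_isPath_iff, Walk.support_cons, List.mem_cons, reduceCtorEq,
          false_or] at hp
        obtain ⟨⟨-, hbq'⟩, hsq'⟩ := hp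
        refine ⟨k + 1, Fin.cons s i, Fin.cons b j, hij.cons hsb (hij.1 ▸ hab) ?_ ?_,
          ?_, ?_, ?_, ?_⟩
        · rintro ⟨r, rfl⟩
          exact hsq' (hi r)
        · rintro ⟨r, rfl⟩
          exact hbq' (hj r)
        · rw [← hN, Walk.length_cons, Walk.length_cons, hlen]
          ring
        · rw [pathValue_succ]
          simp only [Fin.cons_zero, Fin.cons_one, hij.1, Fin.tail_cons, Walk.weight_cons,
            edgeWeight, ← hval]
          abel
        · simp [Fin.forall_fin_succ, hi]
        · simp [Fin.forall_fin_succ, hj]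

lemma CycleBalanced.pathValue_eq (hbal : CycleBalanced A) {s : Fin m} {t : Fin n} {k : ℕ}
    {i : Fin (k + 1) → Fin m} {j : Fin (k + 1) → Fin n} (h : IsPathIn A s t i j) (hk : 1 ≤ k)
    (hst : A s t ≠ none) : pathValue A i j = (A s t).getD 0 := by
  have hcyc := hbal k i j (h.isCycleIn hk hst)
  have hshift : ∑ r : Fin (k + 1), (A (i (r + 1)) (j r)).getD 0
      = ∑ r : Fin k, (A (i r.succ) (j r.castSucc)).getD 0 + (A s t).getD 0 := by
    rw [Fin.sum_univ_castSucc, Fin.last_add_one, h.1, h.2.1]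
    simp only [Fin.coeSucc_eq_succ]
  rw [IsBalancedCycle, Finset.sum_sub_distrib, hshift, ← sub_sub, sub_eq_zero] at hcyc
  exact hcyc

lemma CycleBalanced.weight_eq_zero_of_isCycle (hbal : CycleBalanced A) ⦃u : Fin m ⊕ Fin n⦄
    (c : (HGraph A).Walk u u) (hc : c.IsCycle) : c.weight (edgeWeight A) = 0 := by
  cases c with
  | nil => exact absurd hc Walk.not_isCycle_nil
  | cons h p =>
    have hlen : 2 ≤ p.length := by simpa using hc.three_le_length
    have hp : p.IsPath := ((Walk.cons_isCycle_iff p h).1 hc).1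
    rw [Walk.weight_cons]
    cases u with
    | inl s =>
      obtain ⟨b, rfl, hsb⟩ := hGraph_adj_inl.1 h
      obtain ⟨k, i, j, hij, hk, hval, -⟩ := exists_isPathIn_of_isPath p.reverse hp.reverse
      rw [Walk.length_reverse] at hk
      rw [← neg_neg (p.weight _), ← Walk.weight_reverse edgeWeight_swap, ← hval,
        hbal.pathValue_eq hij (by omega) hsb, edgeWeight, add_neg_cancel]
    | inr b =>
      obtain ⟨a, rfl, hab⟩ := hGraph_adj_inr.1 h
      obtain ⟨k, i, j, hij, hk, hval, -⟩ := exists_isPathIn_of_isPath p hp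
      rw [← hval, hbal.pathValue_eq hij (by omega) hab, edgeWeight, neg_add_cancel]

end PartialMatrix

theorem stmt17_general {G : Type*} [AddCommGroup G] {m n : ℕ}
    (A : Matrix (Fin (m + 1)) (Fin (n + 1)) (Option G))
    (hconn : (HGraph A).Connected) (hbal : CycleBalanced A) :
    (∀ (s : Fin (m + 1)) (t : Fin (n + 1)),
        ∃ (k : ℕ) (i : Fin (k + 1) → Fin (m + 1)) (j : Fin (k + 1) → Fin (n + 1)),
          IsPathIn A s t i j) ∧
    (∀ (s : Fin (m + 1)) (t : Fin (n + 1)) (k k' : ℕ)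
        (i : Fin (k + 1) → Fin (m + 1)) (j : Fin (k + 1) → Fin (n + 1))
        (i' : Fin (k' + 1) → Fin (m + 1)) (j' : Fin (k' + 1) → Fin (n + 1)),
        IsPathIn A s t i j → IsPathIn A s t i' j' →
          pathValue A i j = pathValue A i' j') ∧
    (∀ C : Matrix (Fin (m + 1)) (Fin (n + 1)) G,
        (∀ (s : Fin (m + 1)) (t : Fin (n + 1)),
          ∃ (k : ℕ) (i : Fin (k + 1) → Fin (m + 1)) (j : Fin (k + 1) → Fin (n + 1)),
            IsPathIn A s t i j ∧ C s t = pathValue A i j) →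
        IsCompletion A C ∧ bcs C = 0) := by
  obtain ⟨φ, hφ⟩ := Walk.exists_potential edgeWeight_swap hbal.weight_eq_zero_of_isCycle hconn
  have hval {s t k} {i : Fin (k + 1) → Fin (m + 1)} {j : Fin (k + 1) → Fin (n + 1)}
      (h : IsPathIn A s t i j) : pathValue A i j = φ (.inr t) - φ (.inl s) := by
    obtain ⟨p, hp⟩ := exists_walk_of_isPathIn h
    rw [← hp, hφ]
  refine ⟨fun s t => ?_, fun s t k k' i j i' j' h h' => by rw [hval h, hval h'], fun C hC => ?_⟩
  · obtain ⟨k, i, j, h, -⟩ :=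
      exists_isPathIn_of_isPath _ (hconn.preconnected (.inl s) (.inr t)).some.bypass_isPath
    exact ⟨k, i, j, h⟩
  have hCφ (s t) : C s t = φ (.inr t) - φ (.inl s) := by
    obtain ⟨k, i, j, h, hst⟩ := hC s t
    rw [hst, hval h]
  refine ⟨fun s t hst => ?_, ?_⟩
  · obtain ⟨g, hg⟩ := Option.ne_none_iff_exists'.1 hst
    have hedge := hφ (.cons (hGraph_adj_inl_inr.2 hst) .nil)
    rw [Walk.weight_cons, Walk.weight_nil, add_zero, edgeWeight, hg, Option.getD_some] at hedge
    rw [hg, hCφ, ← hedge]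
  · ext a b
    simp only [bcs, hCφ, Matrix.zero_apply]
    abel

theorem stmt17 {G : Type*} [AddCommGroup G] {m n : ℕ}
    (hm : 1 ≤ m) (hn : 1 ≤ n)
    (A : Matrix (Fin (m + 1)) (Fin (n + 1)) (Option G))
    (hconn : (HGraph A).Connected) (hbal : CycleBalanced A) :
    (∀ (s : Fin (m + 1)) (t : Fin (n + 1)),
        ∃ (k : ℕ) (i : Fin (k + 1) → Fin (m + 1)) (j : Fin (k + 1) → Fin (n + 1)),
          IsPathIn A s t i j) ∧
    (∀ (s : Fin (m + 1)) (t : Fin (n + 1)) (k k' : ℕ)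
        (i : Fin (k + 1) → Fin (m + 1)) (j : Fin (k + 1) → Fin (n + 1))
        (i' : Fin (k' + 1) → Fin (m + 1)) (j' : Fin (k' + 1) → Fin (n + 1)),
        IsPathIn A s t i j → IsPathIn A s t i' j' →
          pathValue A i j = pathValue A i' j') ∧
    (∀ C : Matrix (Fin (m + 1)) (Fin (n + 1)) G,
        (∀ (s : Fin (m + 1)) (t : Fin (n + 1)),
          ∃ (k : ℕ) (i : Fin (k + 1) → Fin (m + 1)) (j : Fin (k + 1) → Fin (n + 1)),
            IsPathIn A s t i j ∧ C s t = pathValue A i j) →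
        IsCompletion A C ∧ bcs C = 0) :=
  stmt17_general A hconn hbal
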